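/- arXiv:1309.7230 — 2 statements merged into one kernel-verified Lean document; each statement's English description precedes it below -/
import Mathlib

section
/- Let N ≥ 1, s ∈ (0,1), and H(r,t) = r^{s - N/2} · ∫_0^{t/r} z^{s-1}/(z+1)^{N/2} dz for r, t > 0. If 0 < r₁ < r₂ and 0 < t₂ < t₁, then H(r₁, t₁) > H(r₂, t₂). -/
/-!
Substituting `z = u / r` turns the kernel into `H(r, t) = ∫₀ᵗ u^(s-1) (u + r)^(-N/2) du`, whose
integrand is positive and nonincreasing in `r`. Hence `H` is nonincreasing in `r` and strictly
increasing in `t`.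
-/

open Real

/-- The kernel `H(r,t) = r^{s-N/2} ∫_0^{t/r} z^{s-1}(z+1)^{-N/2} dz`. -/
noncomputable def Hker (N : ℕ) (s r t : ℝ) : ℝ :=
  r ^ (s - (N : ℝ) / 2) * ∫ z in (0:ℝ)..(t / r), z ^ (s - 1) / (z + 1) ^ ((N : ℝ) / 2)

open Set MeasureTheory intervalIntegral

section

variable {s p r t : ℝ}

lemma intervalIntegrable_rpow_mul_add_rpow_neg (hs : 0 < s) (hr : 0 < r) (ht : 0 ≤ t) (p : ℝ) :
    IntervalIntegrable (fun u => u ^ (s - 1) * (u + r) ^ (-p)) volume 0 t := by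
  refine (intervalIntegrable_rpow' (by linarith)).mul_continuousOn ?_
  refine (continuousOn_id.add continuousOn_const).rpow_const fun u hu => Or.inl ?_
  rw [uIcc_of_le ht] at hu
  exact (show 0 < u + r by linarith [hu.1]).ne'

lemma rpow_mul_rpow_div_div_add_one_rpow (hr : 0 < r) {u : ℝ} (hu : 0 ≤ u) :
    r ^ (s - p) * ((u / r) ^ (s - 1) / (u / r + 1) ^ p) = r * (u ^ (s - 1) * (u + r) ^ (-p)) := by
  have hur : 0 < u + r := by linarith
  rw [show u / r + 1 = (u + r) / r by field_simp, div_rpow hu hr.le, div_rpow hur.le hr.le,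
    rpow_neg hur.le, rpow_sub hr, rpow_sub hr, rpow_one]
  field_simp

lemma rpow_mul_integral_div_eq_integral_add_rpow_neg (hr : 0 < r) (ht : 0 ≤ t) :
    r ^ (s - p) * ∫ z in (0 : ℝ)..t / r, z ^ (s - 1) / (z + 1) ^ p
      = ∫ u in (0 : ℝ)..t, u ^ (s - 1) * (u + r) ^ (-p) := by
  have hsubst := integral_comp_div (fun z => z ^ (s - 1) / (z + 1) ^ p) (a := 0) (b := t) hr.ne'
  rw [zero_div, smul_eq_mul] at hsubst
  have hpoint : EqOn (fun u => r ^ (s - p) * ((u / r) ^ (s - 1) / (u / r + 1) ^ p))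
      (fun u => r * (u ^ (s - 1) * (u + r) ^ (-p))) (uIcc 0 t) := fun u hu =>
    rpow_mul_rpow_div_div_add_one_rpow hr (uIcc_of_le ht ▸ hu).1
  apply mul_left_cancel₀ hr.ne'
  rw [mul_left_comm, ← hsubst, ← intervalIntegral.integral_const_mul, integral_congr hpoint,
    intervalIntegral.integral_const_mul]

lemma integral_rpow_mul_add_rpow_neg_le_of_le (hs : 0 < s) (hp : 0 ≤ p) {r₁ r₂ : ℝ} (hr₁ : 0 < r₁)
    (hr₁₂ : r₁ ≤ r₂) (ht : 0 ≤ t) :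
    ∫ u in (0 : ℝ)..t, u ^ (s - 1) * (u + r₂) ^ (-p)
      ≤ ∫ u in (0 : ℝ)..t, u ^ (s - 1) * (u + r₁) ^ (-p) := by
  refine integral_mono_on ht (intervalIntegrable_rpow_mul_add_rpow_neg hs (hr₁.trans_le hr₁₂) ht p)
    (intervalIntegrable_rpow_mul_add_rpow_neg hs hr₁ ht p) fun u hu => ?_
  exact mul_le_mul_of_nonneg_left
    (rpow_le_rpow_of_nonpos (by linarith [hu.1]) (by linarith) (by linarith)) (rpow_nonneg hu.1 _)

lemma integral_rpow_mul_add_rpow_neg_lt_of_lt (hs : 0 < s) (hr : 0 < r) (p : ℝ) {t₁ t₂ : ℝ}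
    (ht₂ : 0 < t₂) (ht₂₁ : t₂ < t₁) :
    ∫ u in (0 : ℝ)..t₂, u ^ (s - 1) * (u + r) ^ (-p)
      < ∫ u in (0 : ℝ)..t₁, u ^ (s - 1) * (u + r) ^ (-p) := by
  have hhead := intervalIntegrable_rpow_mul_add_rpow_neg hs hr ht₂.le p
  have htail := hhead.symm.trans
    (intervalIntegrable_rpow_mul_add_rpow_neg hs hr (ht₂.trans ht₂₁).le p)
  rw [← integral_add_adjacent_intervals hhead htail]
  refine lt_add_of_pos_right _ (intervalIntegral_pos_of_pos_on htail (fun u hu => ?_) ht₂₁)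
  have hu : 0 < u := ht₂.trans hu.1
  positivity

end

lemma Hker_eq_integral (N : ℕ) (s : ℝ) {r t : ℝ} (hr : 0 < r) (ht : 0 ≤ t) :
    Hker N s r t = ∫ u in (0 : ℝ)..t, u ^ (s - 1) * (u + r) ^ (-((N : ℝ) / 2)) :=
  rpow_mul_integral_div_eq_integral_add_rpow_neg hr ht

theorem Hker_strict_mono_general (N : ℕ) (s : ℝ) (hs : s ∈ Set.Ioo (0:ℝ) 1)
    (r₁ r₂ t₁ t₂ : ℝ) (hr₁ : 0 < r₁) (hr₁₂ : r₁ < r₂) (ht₂ : 0 < t₂) (ht₂₁ : t₂ < t₁) :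
    Hker N s r₂ t₂ < Hker N s r₁ t₁ := by
  rw [Hker_eq_integral N s (hr₁.trans hr₁₂) ht₂.le, Hker_eq_integral N s hr₁ (ht₂.trans ht₂₁).le]
  calc _ ≤ ∫ u in (0 : ℝ)..t₂, u ^ (s - 1) * (u + r₁) ^ (-((N : ℝ) / 2)) :=
        integral_rpow_mul_add_rpow_neg_le_of_le hs.1 (by positivity) hr₁ hr₁₂.le ht₂.le
    _ < _ := integral_rpow_mul_add_rpow_neg_lt_of_lt hs.1 hr₁ _ ht₂ ht₂₁

theorem Hker_strict_mono (N : ℕ) (hN : 1 ≤ N) (s : ℝ) (hs : s ∈ Set.Ioo (0:ℝ) 1)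
    (r₁ r₂ t₁ t₂ : ℝ) (hr₁ : 0 < r₁) (hr₁₂ : r₁ < r₂) (ht₂ : 0 < t₂) (ht₂₁ : t₂ < t₁) :
    Hker N s r₂ t₂ < Hker N s r₁ t₁ :=
  Hker_strict_mono_general N s hs r₁ r₂ t₁ t₂ hr₁ hr₁₂ ht₂ ht₂₁
end

section
/- Let s ∈ (0,1) and x₁ ∈ (0,1]. Then, with A = {y ∈ ℝ^N : y₁ > 0, |y - (1,0,...,0)| ≥ 1} ∩ {y : y₁ ≥ 1} and x = (x₁, 0, ..., 0), one has ∫_A |y - x|^{-N} (|y|² - 2y₁)^{-s} dy ≤ ω_{N-1} ∫_1^∞ τ^{-1}(τ² - 1)^{-s} dτ < ∞, where ω_{N-1} is the surface measure of the unit sphere in ℝ^N. -/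
/-!
Write `e₁ = (1, 0, …, 0)`. On `A` one has `|y|² - 2y₁ = |y - e₁|² - 1`, and `|y - x| ≥ |y - e₁| ≥ 1`
because `x` lies on the segment from `0` to `e₁` while `y₁ ≥ 1`. So the integrand is dominated by
`G (y - e₁)`, where `G z = |z|^{-N} (|z|² - 1)^{-s}` for `|z| ≥ 1` and `G z = 0` otherwise.
Integrating `G` over all of `ℝ^N` in polar coordinates, the Jacobian `r^{N-1}` turns `r^{-N}` into
`r⁻¹`. The resulting integral converges: its integrand is `O((τ - 1)^{-s})` near `1` and
`O(τ^{-1-s})` at infinity.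
-/

open Real MeasureTheory Set Metric Module RealInnerProductSpace

theorem integrableOn_Ioi_one_inv_mul_sq_sub_one_rpow_neg {s : ℝ} (hs0 : 0 < s) (hs1 : s < 1) :
    IntegrableOn (fun τ : ℝ => τ⁻¹ * (τ ^ 2 - 1) ^ (-s)) (Ioi 1) := by
  have hmeas : AEStronglyMeasurable (fun τ : ℝ => τ⁻¹ * (τ ^ 2 - 1) ^ (-s)) := by fun_prop
  have hnonneg : ∀ τ : ℝ, 1 < τ → 0 ≤ τ⁻¹ * (τ ^ 2 - 1) ^ (-s) := fun τ hτ =>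
    mul_nonneg (by positivity) (rpow_nonneg (by nlinarith) _)
  rw [← Ioc_union_Ioi_eq_Ioi one_le_two]
  refine IntegrableOn.union ?_ ?_
  · have hdom : IntegrableOn (fun τ : ℝ => (τ - 1) ^ (-s)) (Ioc 1 2) := by
      have := (intervalIntegral.intervalIntegrable_rpow' (a := 0) (b := 1)
        (by linarith : -1 < -s)).comp_sub_right 1
      norm_num at this
      exact this.1
    refine hdom.mono' hmeas.restrict (ae_restrict_of_forall_mem measurableSet_Ioc fun τ hτ => ?_)
    rw [norm_of_nonneg (hnonneg τ hτ.1)]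
    calc τ⁻¹ * (τ ^ 2 - 1) ^ (-s) ≤ (τ ^ 2 - 1) ^ (-s) :=
          mul_le_of_le_one_left (rpow_nonneg (by nlinarith [hτ.1]) _)
            (inv_le_one_of_one_le₀ hτ.1.le)
      _ ≤ (τ - 1) ^ (-s) :=
          rpow_le_rpow_of_nonpos (by linarith [hτ.1]) (by nlinarith [hτ.1]) (by linarith)
  · refine (integrableOn_Ioi_rpow_of_lt (by linarith : -1 - s < -1) two_pos).mono'
      hmeas.restrict (ae_restrict_of_forall_mem measurableSet_Ioi fun τ (hτ : 2 < τ) => ?_)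
    have hτ0 : 0 < τ := by linarith
    rw [norm_of_nonneg (hnonneg τ (by linarith))]
    calc τ⁻¹ * (τ ^ 2 - 1) ^ (-s) ≤ τ⁻¹ * τ ^ (-s) :=
          mul_le_mul_of_nonneg_left (rpow_le_rpow_of_nonpos hτ0 (by nlinarith) (by linarith))
            (by positivity)
      _ = τ ^ (-1 - s) := by
          rw [← rpow_neg_one τ, ← rpow_add hτ0, sub_eq_add_neg]

section ExteriorOfUnitBall

variable {E : Type*} [NormedAddCommGroup E] [NormedSpace ℝ E] [FiniteDimensional ℝ E]
  [MeasurableSpace E] [BorelSpace E] [Nontrivial E] (μ : Measure E) [μ.IsAddHaarMeasure]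

lemma pow_pred_mul_rpow_neg {n : ℕ} (hn : 0 < n) {r : ℝ} (hr : 0 < r) :
    r ^ (n - 1) * r ^ (-(n : ℝ)) = r⁻¹ := by
  rw [← rpow_natCast, ← rpow_add hr, Nat.cast_pred hn, ← rpow_neg_one]
  ring_nf

lemma eqOn_pow_pred_smul_indicator_Ici_one {n : ℕ} (hn : 0 < n) (g : ℝ → ℝ) :
    EqOn (fun r => r ^ (n - 1) • (Ici 1).indicator (fun ρ => ρ ^ (-(n : ℝ)) * g ρ) r)
      ((Ici 1).indicator fun ρ => ρ⁻¹ * g ρ) (Ioi 0) := by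
  intro r (hr : 0 < r)
  by_cases h1 : r ∈ Ici 1
  · simp only [indicator_of_mem h1, smul_eq_mul, ← mul_assoc, pow_pred_mul_rpow_neg hn hr]
  · simp [indicator_of_notMem h1]

lemma integrableOn_Ioi_zero_indicator_Ici_one_iff {f : ℝ → ℝ} :
    IntegrableOn ((Ici 1).indicator f) (Ioi 0) ↔ IntegrableOn f (Ioi 1) := by
  rw [IntegrableOn, integrable_indicator_iff measurableSet_Ici, IntegrableOn,
    Measure.restrict_restrict measurableSet_Ici, inter_eq_left.2 (Ici_subset_Ioi.2 one_pos)]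
  exact integrableOn_Ici_iff_integrableOn_Ioi

lemma setIntegral_Ioi_zero_indicator_Ici_one (f : ℝ → ℝ) :
    ∫ r in Ioi 0, (Ici 1).indicator f r = ∫ r in Ioi 1, f r := by
  rw [setIntegral_indicator measurableSet_Ici, inter_eq_right.2 (Ici_subset_Ioi.2 one_pos),
    integral_Ici_eq_integral_Ioi]

theorem integrable_indicator_Ici_one_norm_iff (g : ℝ → ℝ) :
    Integrable (fun x : E => (Ici 1).indicator (fun r => r ^ (-(finrank ℝ E : ℝ)) * g r) ‖x‖)
        μ ↔
      IntegrableOn (fun r => r⁻¹ * g r) (Ioi 1) := by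
  rw [integrable_fun_norm_addHaar, integrableOn_congr_fun
    (eqOn_pow_pred_smul_indicator_Ici_one finrank_pos g) measurableSet_Ioi,
    integrableOn_Ioi_zero_indicator_Ici_one_iff]

theorem integral_indicator_Ici_one_norm (g : ℝ → ℝ) :
    ∫ x, (Ici 1).indicator (fun r => r ^ (-(finrank ℝ E : ℝ)) * g r) ‖x‖ ∂μ =
      finrank ℝ E * μ.real (ball 0 1) * ∫ r in Ioi 1, r⁻¹ * g r := by
  rw [integral_fun_norm_addHaar, setIntegral_congr_fun measurableSet_Ioi
    (eqOn_pow_pred_smul_indicator_Ici_one finrank_pos g),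
    setIntegral_Ioi_zero_indicator_Ici_one, nsmul_eq_mul, smul_eq_mul, mul_assoc]

end ExteriorOfUnitBall

section UnitVector

variable {F : Type*} [NormedAddCommGroup F] [InnerProductSpace ℝ F] {e y : F}

lemma norm_sq_sub_two_inner_eq (he : ‖e‖ = 1) :
    ‖y‖ ^ 2 - 2 * ⟪y, e⟫ = ‖y - e‖ ^ 2 - 1 := by
  rw [norm_sub_sq_real, he]
  ring

lemma norm_sub_le_norm_sub_smul (he : ‖e‖ = 1) {t : ℝ} (ht : t ≤ 1) (hy : 1 ≤ ⟪y, e⟫) :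
    ‖y - e‖ ≤ ‖y - t • e‖ := by
  have key : ‖y - t • e‖ ^ 2 - ‖y - e‖ ^ 2 = (1 - t) * (2 * ⟪y, e⟫ - 1 - t) := by
    rw [norm_sub_sq_real, norm_sub_sq_real, inner_smul_right, norm_smul, he, norm_eq_abs,
      mul_one, sq_abs]
    ring
  have : 0 ≤ (1 - t) * (2 * ⟪y, e⟫ - 1 - t) := mul_nonneg (by linarith) (by linarith)
  exact (sq_le_sq₀ (norm_nonneg _) (norm_nonneg _)).1 (by linarith)

lemma rpow_neg_mul_rpow_neg_nonneg (he : ‖e‖ = 1) (hye : 1 ≤ ‖y - e‖) (t n s : ℝ) :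
    0 ≤ ‖y - t • e‖ ^ (-n) * (‖y‖ ^ 2 - 2 * ⟪y, e⟫) ^ (-s) := by
  rw [norm_sq_sub_two_inner_eq he]
  exact mul_nonneg (rpow_nonneg (norm_nonneg _) _) (rpow_nonneg (by nlinarith) _)

lemma rpow_neg_mul_rpow_neg_le_indicator (he : ‖e‖ = 1) {t : ℝ} (ht : t ≤ 1)
    (hy : 1 ≤ ⟪y, e⟫) (hye : 1 ≤ ‖y - e‖) {n : ℝ} (hn : 0 ≤ n) (s : ℝ) :
    ‖y - t • e‖ ^ (-n) * (‖y‖ ^ 2 - 2 * ⟪y, e⟫) ^ (-s) ≤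
      (Ici 1).indicator (fun r => r ^ (-n) * (r ^ 2 - 1) ^ (-s)) ‖y - e‖ := by
  rw [indicator_of_mem (mem_Ici.2 hye), norm_sq_sub_two_inner_eq he]
  exact mul_le_mul_of_nonneg_right
    (rpow_le_rpow_of_nonpos (by linarith) (norm_sub_le_norm_sub_smul he ht hy) (by linarith))
    (rpow_nonneg (by nlinarith) _)

end UnitVector

section Domination

variable {E : Type*} [NormedAddCommGroup E] [InnerProductSpace ℝ E] [FiniteDimensional ℝ E]
  [MeasurableSpace E] [BorelSpace E] (μ : Measure E) [μ.IsAddHaarMeasure]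

theorem setIntegral_rpow_neg_norm_sub_smul_mul_le {e : E} (he : ‖e‖ = 1) {t : ℝ} (ht : t ≤ 1)
    {A : Set E} (hA : MeasurableSet A) (hA_sub : ∀ y ∈ A, 1 ≤ ⟪y, e⟫ ∧ 1 ≤ ‖y - e‖)
    {s : ℝ} (hs0 : 0 < s) (hs1 : s < 1) :
    ∫ y in A, ‖y - t • e‖ ^ (-(finrank ℝ E : ℝ)) * (‖y‖ ^ 2 - 2 * ⟪y, e⟫) ^ (-s) ∂μ ≤
      finrank ℝ E * μ.real (ball 0 1) * ∫ τ in Ioi 1, τ⁻¹ * (τ ^ 2 - 1) ^ (-s) := by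
  have : Nontrivial E := nontrivial_of_ne e 0 (by rintro rfl; simp at he)
  let G (z : E) : ℝ :=
    (Ici 1).indicator (fun r => r ^ (-(finrank ℝ E : ℝ)) * (r ^ 2 - 1) ^ (-s)) ‖z‖
  have hG_nonneg (z : E) : 0 ≤ G z :=
    indicator_nonneg (fun r (hr : 1 ≤ r) =>
      mul_nonneg (rpow_nonneg (by linarith) _) (rpow_nonneg (by nlinarith) _)) _
  have hG : Integrable G μ := (integrable_indicator_Ici_one_norm_iff μ _).2
    (integrableOn_Ioi_one_inv_mul_sq_sub_one_rpow_neg hs0 hs1)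
  calc ∫ y in A, ‖y - t • e‖ ^ (-(finrank ℝ E : ℝ)) * (‖y‖ ^ 2 - 2 * ⟪y, e⟫) ^ (-s) ∂μ
      ≤ ∫ y in A, G (y - e) ∂μ :=
        integral_mono_of_nonneg
          (ae_restrict_of_forall_mem hA fun y hy =>
            rpow_neg_mul_rpow_neg_nonneg he (hA_sub y hy).2 _ _ _)
          (hG.comp_sub_right e).integrableOn
          (ae_restrict_of_forall_mem hA fun y hy =>
            rpow_neg_mul_rpow_neg_le_indicator he ht (hA_sub y hy).1 (hA_sub y hy).2
              (Nat.cast_nonneg _) s)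
    _ ≤ ∫ y, G (y - e) ∂μ :=
        setIntegral_le_integral (hG.comp_sub_right e) (.of_forall fun _ => hG_nonneg _)
    _ = ∫ z, G z ∂μ := integral_sub_right_eq_self G e
    _ = _ := integral_indicator_Ici_one_norm μ _

end Domination

theorem integral_bound_outside_ball (N : ℕ) (hN : 0 < N) (s : ℝ) (hs : s ∈ Set.Ioo (0:ℝ) 1)
    (x₁ : ℝ) (hx₁ : x₁ ∈ Set.Ioc (0:ℝ) 1) :
    -- `e₁ = (1,0,…,0)`, `x = (x₁,0,…,0)`
    let e₁ : EuclideanSpace ℝ (Fin N) := WithLp.toLp 2 (fun i => if i = (⟨0, hN⟩ : Fin N) then 1 else 0)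
    let x : EuclideanSpace ℝ (Fin N) := WithLp.toLp 2 (fun i => if i = (⟨0, hN⟩ : Fin N) then x₁ else 0)
    let A : Set (EuclideanSpace ℝ (Fin N)) :=
      {y | 0 < y ⟨0, hN⟩ ∧ 1 ≤ ‖y - e₁‖} ∩ {y | 1 ≤ y ⟨0, hN⟩}
    -- `ω` is the surface measure of the unit sphere in `ℝ^N`
    let ω : ℝ := (N : ℝ) * (volume (Metric.ball (0 : EuclideanSpace ℝ (Fin N)) 1)).toReal
    (∫ y in A, ‖y - x‖ ^ (-(N : ℝ)) * (‖y‖ ^ 2 - 2 * y ⟨0, hN⟩) ^ (-s))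
        ≤ ω * ∫ τ in Set.Ioi (1:ℝ), τ⁻¹ * (τ ^ 2 - 1) ^ (-s) ∧
      IntegrableOn (fun τ : ℝ => τ⁻¹ * (τ ^ 2 - 1) ^ (-s)) (Set.Ioi 1) := by
  intro e₁ x A ω
  have he₁ : e₁ = EuclideanSpace.single ⟨0, hN⟩ 1 := by
    ext j; by_cases hj : j = ⟨0, hN⟩ <;> simp [e₁, hj]
  have hx : x = x₁ • e₁ := by
    ext j; by_cases hj : j = ⟨0, hN⟩ <;> simp [x, e₁, hj]
  have hcoord (y : EuclideanSpace ℝ (Fin N)) : y ⟨0, hN⟩ = ⟪y, e₁⟫ := by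
    simp [he₁, EuclideanSpace.inner_single_right]
  have hA : MeasurableSet A := by measurability
  refine ⟨?_, integrableOn_Ioi_one_inv_mul_sq_sub_one_rpow_neg hs.1 hs.2⟩
  have hbound := setIntegral_rpow_neg_norm_sub_smul_mul_le volume (by simp [he₁]) hx₁.2 hA
    (fun y hy => ⟨hcoord y ▸ hy.2, hy.1.2⟩) hs.1 hs.2
  rw [finrank_euclideanSpace_fin] at hbound
  simp only [hcoord, hx]
  exact hbound
end
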